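/- Consider the inhomogeneous renewal risk model with initial reserve x ≥ 0, premium rate c > 0, independent nonnegative claim sizes Z₁, Z₂, … , and independent nonnegative interarrival times θ₁, θ₂, … (the two sequences mutually independent, θ_i nondegenerate at zero). Assume (C1) sup_i E[e^{γ Z_i}] < ∞ for some γ > 0, (C2) lim_{u→∞} sup_i E[θ_i 1_{θ_i > u}] = 0, and (C3) limsup_{n→∞} (1/n) Σ_{i=1}^n (E[Z_i] − c E[θ_i]) < 0. Then there exist constants c₁ > 0 and c₂ ≥ 0 such that the ruin probability ψ(x) satisfies ψ(x) ≤ e^{-c₁ x} for all x ≥ c₂. -/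

import Mathlib

/-!
For a small `t > 0`, the uniform exponential moment (C1) gives a second-order bound on
`E[exp (t Z_i)]`, and truncating `θ_i` at a level `u` where its tail mean is small (C2) gives
one on `E[exp (-c t θ_i)]`; together each increment has `E[exp (t (Z_i - c θ_i))] ≤
exp (t (E Z_i - c E θ_i) + t δ / 2)`. By independence the moment generating function of the
partial sums is the product of these, so the negative drift (C3) bounds it by `A rⁿ` with
`r < 1`. Chernoff's inequality and a union bound over `n` give `ψ(x) ≤ e^{-t x} A / (1 - r)`.
-/

open MeasureTheory ProbabilityTheory Filter Real Finset

lemma exp_le_one_add_add_sq_mul_exp {t : ℝ} (ht : 0 ≤ t) :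
    exp t ≤ 1 + t + t ^ 2 * exp t := by
  have key : (1 - t) * exp t ≤ 1 := by
    have := add_one_le_exp (-t)
    calc (1 - t) * exp t ≤ exp (-t) * exp t := by gcongr; linarith
      _ = 1 := by rw [← exp_add, neg_add_cancel, exp_zero]
  nlinarith [exp_pos t]

lemma exp_mul_le_one_add_mul_add_sq_mul_exp {γ h z : ℝ} (hγ : 0 < γ) (hh₀ : 0 ≤ h)
    (hh : h ≤ γ / 2) (hz : 0 ≤ z) :
    exp (h * z) ≤ 1 + h * z + h ^ 2 * (8 / γ ^ 2) * exp (γ * z) := by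
  have hsq : z ^ 2 ≤ 8 / γ ^ 2 * exp (γ * z / 2) := by
    have := quadratic_le_exp_of_nonneg (by positivity : 0 ≤ γ * z / 2)
    rw [div_mul_eq_mul_div, le_div_iff₀ (by positivity)]
    nlinarith
  have hexp : exp (h * z) ≤ exp (γ * z / 2) := exp_le_exp.2 (by nlinarith)
  have hsplit : exp (γ * z) = exp (γ * z / 2) * exp (γ * z / 2) := by
    rw [← exp_add]; ring_nf
  calc exp (h * z) ≤ 1 + h * z + h ^ 2 * (z ^ 2 * exp (h * z)) := by
        have := exp_le_one_add_add_sq_mul_exp (mul_nonneg hh₀ hz); nlinarith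
    _ ≤ 1 + h * z + h ^ 2 * (8 / γ ^ 2 * exp (γ * z / 2) * exp (γ * z / 2)) := by
        gcongr
    _ = 1 + h * z + h ^ 2 * (8 / γ ^ 2) * exp (γ * z) := by rw [hsplit]; ring

lemma exp_neg_mul_le_one_sub_mul_add_tail {s u y : ℝ} (hs : 0 ≤ s) (hu : 0 ≤ u)
    (hsu : s * u ≤ 1) (hy : 0 ≤ y) :
    exp (-s * y) ≤ 1 - s * y + s * (if u < y then y else 0) + (s * u) ^ 2 := by
  set m := min y u
  have hm₀ : 0 ≤ m := le_min hy hu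
  have hmu : s * m ≤ s * u := mul_le_mul_of_nonneg_left (min_le_right _ _) hs
  have hquad : |exp (-(s * m)) - 1 - -(s * m)| ≤ (-(s * m)) ^ 2 :=
    abs_exp_sub_one_sub_id_le (by rw [abs_neg, abs_of_nonneg (by positivity)]; linarith)
  have htrunc : y - (if u < y then y else 0) ≤ m := by
    split_ifs with h
    · simpa using hm₀
    · simp [m, min_eq_left (not_lt.1 h)]
  have hsq : (s * m) ^ 2 ≤ (s * u) ^ 2 := pow_le_pow_left₀ (by positivity) hmu 2
  calc exp (-s * y) ≤ exp (-(s * m)) :=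
        exp_le_exp.2 (by nlinarith [min_le_left y u])
    _ ≤ 1 - s * m + (s * m) ^ 2 := by linarith [(abs_le.1 hquad).2]
    _ ≤ 1 - s * y + s * (if u < y then y else 0) + (s * u) ^ 2 := by
        nlinarith [mul_le_mul_of_nonneg_left htrunc hs]

lemma sum_sub_mul_eq_add {Ω ι : Type*} {X Y : ι → Ω → ℝ} (c : ℝ) (s : Finset ι) :
    (fun ω ↦ ∑ i ∈ s, (X i ω - c * Y i ω)) =
      (∑ i ∈ s, X i) + fun ω ↦ -c * ∑ i ∈ s, Y i ω := by
  ext ω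
  rw [Pi.add_apply, Finset.sum_apply, sum_sub_distrib, ← mul_sum]
  ring

lemma exists_sum_range_le_sub_mul_of_limsup_lt_zero {m : ℕ → ℝ}
    (h : limsup (fun n : ℕ ↦ (1 / (n : ℝ)) * ∑ i ∈ range n, m i) atTop < 0) :
    ∃ δ > 0, ∃ B, ∀ n, ∑ i ∈ range n, m i ≤ B - δ * n := by
  set L := limsup (fun n : ℕ ↦ (1 / (n : ℝ)) * ∑ i ∈ range n, m i) atTop
  have hbdd : IsBoundedUnder (· ≤ ·) atTop
      (fun n : ℕ ↦ (1 / (n : ℝ)) * ∑ i ∈ range n, m i) := by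
    -- otherwise the real `limsup` takes its junk value `0`
    by_contra hbdd
    exact h.ne (Real.limsup_of_not_isBoundedUnder hbdd)
  have hev : ∀ᶠ n : ℕ in atTop, ∑ i ∈ range n, m i + (-L / 2) * n ≤ 0 := by
    filter_upwards [eventually_lt_of_limsup_lt (by linarith : L < L / 2) hbdd,
      eventually_ge_atTop 1] with n hn hn1
    have hn_pos : (0 : ℝ) < n := by exact_mod_cast hn1
    rw [one_div, inv_mul_lt_iff₀ hn_pos] at hn
    nlinarith
  obtain ⟨B, hB⟩ := (isBoundedUnder_of_eventually_le hev).bddAbove_range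
  exact ⟨-L / 2, by linarith, B, fun n ↦ by linarith [hB ⟨n, rfl⟩]⟩

lemma prod_range_le_exp_mul_geometric {a m : ℕ → ℝ} {t δ B : ℝ} (ht : 0 ≤ t)
    (ha : ∀ i, 0 ≤ a i) (ham : ∀ i, a i ≤ exp (t * m i + t * δ / 2))
    (hm : ∀ n, ∑ i ∈ range n, m i ≤ B - δ * n) (n : ℕ) :
    ∏ i ∈ range n, a i ≤ exp (t * B) * exp (-(t * δ / 2)) ^ n := by
  calc ∏ i ∈ range n, a i ≤ ∏ i ∈ range n, exp (t * m i + t * δ / 2) :=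
        prod_le_prod (fun i _ ↦ ha i) (fun i _ ↦ ham i)
    _ = exp (t * ∑ i ∈ range n, m i + n * (t * δ / 2)) := by
        rw [← exp_sum, sum_add_distrib, mul_sum, sum_const, card_range, nsmul_eq_mul]
    _ ≤ exp (t * (B - δ * n) + n * (t * δ / 2)) := by gcongr; exact hm n
    _ = exp (t * B) * exp (-(t * δ / 2)) ^ n := by
        rw [← exp_nat_mul, ← exp_add]; ring_nf

lemma exists_forall_ge_le_exp_neg_half_mul {f : ℝ → ENNReal} {t D : ℝ} (ht : 0 < t)
    (hf : ∀ x, f x ≤ ENNReal.ofReal (exp (-t * x) * D)) :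
    ∃ x₀ ≥ (0 : ℝ), ∀ x ≥ x₀, f x ≤ ENNReal.ofReal (exp (-(t / 2) * x)) := by
  refine ⟨max 0 (2 * log D / t), le_max_left _ _, fun x hx ↦ (hf x).trans ?_⟩
  have hlog : log D ≤ t * x / 2 := by
    have := (le_max_right _ _).trans hx
    rw [div_le_iff₀ ht] at this
    linarith
  gcongr
  calc exp (-t * x) * D ≤ exp (-t * x) * exp (t * x / 2) := by
        gcongr
        exact (le_exp_log D).trans (exp_le_exp.2 hlog)
    _ = exp (-(t / 2) * x) := by rw [← exp_add]; ring_nf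

section

variable {Ω : Type*} [MeasurableSpace Ω] {μ : Measure Ω}

lemma mgf_le_exp_of_integral_exp_le [IsProbabilityMeasure μ] {X : Ω → ℝ} {γ C h : ℝ}
    (hγ : 0 < γ) (hh₀ : 0 ≤ h) (hh : h ≤ γ / 2) (hX : ∀ ω, 0 ≤ X ω)
    (hX_int : Integrable X μ) (hexp_int : Integrable (fun ω ↦ exp (γ * X ω)) μ)
    (hC : ∫ ω, exp (γ * X ω) ∂μ ≤ C) :
    mgf X μ h ≤ exp (h * μ[X] + h ^ 2 * (8 / γ ^ 2 * C)) := by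
  have hbound_int :
      Integrable (fun ω ↦ 1 + h * X ω + h ^ 2 * (8 / γ ^ 2) * exp (γ * X ω)) μ :=
    ((integrable_const 1).add (hX_int.const_mul h)).add (hexp_int.const_mul _)
  calc mgf X μ h
      ≤ ∫ ω, (1 + h * X ω + h ^ 2 * (8 / γ ^ 2) * exp (γ * X ω)) ∂μ :=
        integral_mono_of_nonneg (ae_of_all _ fun ω ↦ (exp_pos _).le) hbound_int
          (ae_of_all _ fun ω ↦ exp_mul_le_one_add_mul_add_sq_mul_exp hγ hh₀ hh (hX ω))
    _ = 1 + h * μ[X] + h ^ 2 * (8 / γ ^ 2) * ∫ ω, exp (γ * X ω) ∂μ := by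
        rw [integral_add _ (hexp_int.const_mul _), integral_add (integrable_const _)
          (hX_int.const_mul h), integral_const_mul, integral_const_mul]
        · simp
        · exact (integrable_const _).add (hX_int.const_mul h)
    _ ≤ 1 + (h * μ[X] + h ^ 2 * (8 / γ ^ 2 * C)) := by
        have : 0 ≤ h ^ 2 * (8 / γ ^ 2) := by positivity
        nlinarith
    _ ≤ exp (h * μ[X] + h ^ 2 * (8 / γ ^ 2 * C)) := by
        linarith [add_one_le_exp (h * μ[X] + h ^ 2 * (8 / γ ^ 2 * C))]

lemma mgf_neg_le_exp_of_tail [IsProbabilityMeasure μ] {Y : Ω → ℝ} {s u : ℝ} (hs : 0 ≤ s)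
    (hu : 0 ≤ u) (hsu : s * u ≤ 1)
    (hY : ∀ ω, 0 ≤ Y ω) (hY_meas : Measurable Y) (hY_int : Integrable Y μ) :
    mgf Y μ (-s) ≤
      exp (-s * μ[Y] + s * ∫ ω, {ω | u < Y ω}.indicator Y ω ∂μ + (s * u) ^ 2) := by
  have htail_int : Integrable ({ω | u < Y ω}.indicator Y) μ :=
    hY_int.indicator (measurableSet_lt measurable_const hY_meas)
  have hbound : ∀ ω, exp (-s * Y ω) ≤
      1 - s * Y ω + s * {ω | u < Y ω}.indicator Y ω + (s * u) ^ 2 := fun ω ↦ by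
    simpa only [Set.indicator_apply, Set.mem_ofPred_eq] using
      exp_neg_mul_le_one_sub_mul_add_tail hs hu hsu (hY ω)
  have hbound_int : Integrable (fun ω ↦
      1 - s * Y ω + s * {ω | u < Y ω}.indicator Y ω + (s * u) ^ 2) μ :=
    (((integrable_const 1).sub (hY_int.const_mul s)).add (htail_int.const_mul s)).add
      (integrable_const _)
  calc mgf Y μ (-s)
      ≤ ∫ ω, (1 - s * Y ω + s * {ω | u < Y ω}.indicator Y ω + (s * u) ^ 2) ∂μ :=
        integral_mono_of_nonneg (ae_of_all _ fun ω ↦ (exp_pos _).le) hbound_int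
          (ae_of_all _ hbound)
    _ = 1 + (-s * μ[Y] + s * ∫ ω, {ω | u < Y ω}.indicator Y ω ∂μ + (s * u) ^ 2) := by
        rw [integral_add _ (integrable_const _), integral_add _ (htail_int.const_mul s),
          integral_sub (integrable_const _) (hY_int.const_mul s), integral_const_mul,
          integral_const_mul]
        · simp only [integral_const, probReal_univ, smul_eq_mul, mul_one, one_mul, neg_mul]
          ring
        · exact (integrable_const _).sub (hY_int.const_mul s)
        · exact ((integrable_const _).sub (hY_int.const_mul s)).add (htail_int.const_mul s)
    _ ≤ _ := by rw [add_comm]; exact add_one_le_exp _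

lemma integrable_exp_mul_of_nonpos [IsFiniteMeasure μ] {Y : Ω → ℝ} {s : ℝ} (hs : s ≤ 0)
    (hY : ∀ ω, 0 ≤ Y ω) (hY_meas : Measurable Y) :
    Integrable (fun ω ↦ exp (s * Y ω)) μ :=
  (integrable_const 1).mono' (by fun_prop) (ae_of_all _ fun ω ↦ by
    rw [norm_of_nonneg (exp_pos _).le, exp_le_one_iff]
    exact mul_nonpos_of_nonpos_of_nonneg hs (hY ω))

lemma measure_exists_lt_le_of_mgf_le_geometric [IsFiniteMeasure μ] {S : ℕ → Ω → ℝ}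
    {t A r : ℝ} (ht : 0 ≤ t) (hr₀ : 0 ≤ r) (hr₁ : r < 1)
    (h_int : ∀ n, Integrable (fun ω ↦ exp (t * S n ω)) μ)
    (hmgf : ∀ n, mgf (S n) μ t ≤ A * r ^ n) (x : ℝ) :
    μ {ω | ∃ n, x < S n ω} ≤ ENNReal.ofReal (exp (-t * x) * (A / (1 - r))) := by
  have hA : 0 ≤ A := by simpa using (mgf_nonneg (X := S 0) (μ := μ) (t := t)).trans (hmgf 0)
  have hterm :
      ∀ n, μ {ω | x < S n ω} ≤ ENNReal.ofReal (exp (-t * x) * A * r ^ n) := fun n ↦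
    calc μ {ω | x < S n ω} ≤ μ {ω | x ≤ S n ω} :=
          measure_mono (Set.ofPred_subset_ofPred.2 fun _ ↦ le_of_lt)
      _ = ENNReal.ofReal (μ.real {ω | x ≤ S n ω}) := (ofReal_measureReal (by finiteness)).symm
      _ ≤ ENNReal.ofReal (exp (-t * x) * A * r ^ n) := by
          rw [mul_assoc]
          gcongr
          exact (measure_ge_le_exp_mul_mgf x ht (h_int n)).trans (by gcongr; exact hmgf n)
  have hsum : HasSum (fun n ↦ exp (-t * x) * A * r ^ n) (exp (-t * x) * (A / (1 - r))) := by
    rw [div_eq_mul_inv, ← mul_assoc]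
    exact (hasSum_geometric_of_lt_one hr₀ hr₁).mul_left _
  calc μ {ω | ∃ n, x < S n ω} = μ (⋃ n, {ω | x < S n ω}) := by rw [Set.ofPred_exists]
    _ ≤ ∑' n, μ {ω | x < S n ω} := measure_iUnion_le _
    _ ≤ ∑' n, ENNReal.ofReal (exp (-t * x) * A * r ^ n) := ENNReal.tsum_le_tsum hterm
    _ = ENNReal.ofReal (exp (-t * x) * (A / (1 - r))) := by
        rw [← ENNReal.ofReal_tsum_of_nonneg (fun n ↦ by positivity) hsum.summable, hsum.tsum_eq]

section TwoIndependentSequences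

variable {ι : Type*} {X Y : ι → Ω → ℝ}

lemma indepFun_sum_const_mul_sum (hXY : IndepFun (fun ω i ↦ X i ω) (fun ω i ↦ Y i ω) μ)
    (c : ℝ) (s : Finset ι) :
    IndepFun (∑ i ∈ s, X i) (fun ω ↦ -c * ∑ i ∈ s, Y i ω) μ := by
  convert hXY.comp (φ := fun x ↦ ∑ i ∈ s, x i) (ψ := fun y ↦ -c * ∑ i ∈ s, y i)
    (by fun_prop) (by fun_prop) using 1
  · ext ω
    simp only [Finset.sum_apply, Function.comp_apply]
  · rfl

lemma mgf_sum_sub_mul (hX : ∀ i, Measurable (X i)) (hY : ∀ i, Measurable (Y i))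
    (hX_indep : iIndepFun X μ) (hY_indep : iIndepFun Y μ)
    (hXY : IndepFun (fun ω i ↦ X i ω) (fun ω i ↦ Y i ω) μ)
    (c t : ℝ) (s : Finset ι) :
    mgf (fun ω ↦ ∑ i ∈ s, (X i ω - c * Y i ω)) μ t =
      (∏ i ∈ s, mgf (X i) μ t) * ∏ i ∈ s, mgf (Y i) μ (-(c * t)) := by
  rw [sum_sub_mul_eq_add, (indepFun_sum_const_mul_sum hXY c s).mgf_add' (by fun_prop)
    (by fun_prop), hX_indep.mgf_sum hX, mgf_const_mul, ← sum_fn,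
    hY_indep.mgf_sum hY, neg_mul]

lemma integrable_exp_mul_sum_sub_mul (hX : ∀ i, Measurable (X i)) (hY : ∀ i, Measurable (Y i))
    (hX_indep : iIndepFun X μ) (hY_indep : iIndepFun Y μ)
    (hXY : IndepFun (fun ω i ↦ X i ω) (fun ω i ↦ Y i ω) μ)
    {c t : ℝ} {s : Finset ι}
    (hX_int : ∀ i ∈ s, Integrable (fun ω ↦ exp (t * X i ω)) μ)
    (hY_int : ∀ i ∈ s, Integrable (fun ω ↦ exp (-(c * t) * Y i ω)) μ) :
    Integrable (fun ω ↦ exp (t * ∑ i ∈ s, (X i ω - c * Y i ω))) μ := by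
  have := hX_indep.isProbabilityMeasure
  have hsum_Y : Integrable (fun ω ↦ exp (t * (-c * ∑ i ∈ s, Y i ω))) μ := by
    simpa only [Finset.sum_apply, ← mul_assoc, mul_neg, mul_comm t c, neg_mul] using
      hY_indep.integrable_exp_mul_sum hY hY_int
  have h := (indepFun_sum_const_mul_sum hXY c s).integrable_exp_mul_add
    (hX_indep.integrable_exp_mul_sum hX hX_int) hsum_Y
  rwa [← sum_sub_mul_eq_add] at h

end TwoIndependentSequences

lemma mgf_mul_mgf_neg_le_exp [IsProbabilityMeasure μ] {X Y : Ω → ℝ} {γ C c t u ε : ℝ}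
    (hγ : 0 < γ) (hc : 0 ≤ c) (ht : 0 ≤ t) (htγ : t ≤ γ / 2) (hu : 0 ≤ u)
    (htu : c * t * u ≤ 1) (hX : ∀ ω, 0 ≤ X ω) (hX_int : Integrable X μ)
    (hexp_int : Integrable (fun ω ↦ exp (γ * X ω)) μ)
    (hC : ∫ ω, exp (γ * X ω) ∂μ ≤ C) (hY : ∀ ω, 0 ≤ Y ω) (hY_meas : Measurable Y)
    (hY_int : Integrable Y μ)
    (hε : ∫ ω, {ω | u < Y ω}.indicator Y ω ∂μ ≤ ε) :
    mgf X μ t * mgf Y μ (-(c * t)) ≤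
      exp (t * (μ[X] - c * μ[Y]) + c * t * ε + t ^ 2 * (8 / γ ^ 2 * C + c ^ 2 * u ^ 2)) := by
  calc mgf X μ t * mgf Y μ (-(c * t))
      ≤ exp (t * μ[X] + t ^ 2 * (8 / γ ^ 2 * C)) * exp (-(c * t) * μ[Y] +
          c * t * ∫ ω, {ω | u < Y ω}.indicator Y ω ∂μ + (c * t * u) ^ 2) :=
        mul_le_mul (mgf_le_exp_of_integral_exp_le hγ ht htγ hX hX_int hexp_int hC)
          (mgf_neg_le_exp_of_tail (by positivity) hu htu hY hY_meas hY_int) mgf_nonneg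
          (exp_pos _).le
    _ ≤ _ := by
        rw [← exp_add, exp_le_exp]
        nlinarith [mul_le_mul_of_nonneg_left hε (by positivity : 0 ≤ c * t)]

lemma exists_mgf_sum_range_le_geometric [IsProbabilityMeasure μ] {Z θ : ℕ → Ω → ℝ}
    {c γ : ℝ} (hc : 0 < c) (hγ : 0 < γ)
    (hZmeas : ∀ i, Measurable (Z i)) (hθmeas : ∀ i, Measurable (θ i))
    (hZpos : ∀ i ω, 0 ≤ Z i ω) (hθpos : ∀ i ω, 0 ≤ θ i ω)
    (hZindep : iIndepFun Z μ) (hθindep : iIndepFun θ μ)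
    (hmutindep : IndepFun (fun ω i ↦ Z i ω) (fun ω i ↦ θ i ω) μ)
    (hZint : ∀ i, Integrable (Z i) μ) (hθint : ∀ i, Integrable (θ i) μ)
    (hexpint : ∀ i, Integrable (fun ω ↦ exp (γ * Z i ω)) μ)
    (hC1 : ∃ C : ℝ, ∀ i, ∫ ω, exp (γ * Z i ω) ∂μ ≤ C)
    (hC2 : ∀ ε > (0 : ℝ), ∃ u₀ : ℝ, ∀ u ≥ u₀, ∀ i,
      ∫ ω, {ω | u < θ i ω}.indicator (θ i) ω ∂μ ≤ ε)
    (hC3 : limsup (fun n : ℕ ↦ (1 / (n : ℝ)) *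
      ∑ i ∈ range n, (∫ ω, Z i ω ∂μ - c * ∫ ω, θ i ω ∂μ)) atTop < 0) :
    ∃ t > 0, ∃ A r : ℝ, 0 ≤ r ∧ r < 1 ∧ ∀ n,
      Integrable (fun ω ↦ exp (t * ∑ i ∈ range n, (Z i ω - c * θ i ω))) μ ∧
      mgf (fun ω ↦ ∑ i ∈ range n, (Z i ω - c * θ i ω)) μ t ≤ A * r ^ n := by
  obtain ⟨C, hC⟩ := hC1
  have hC₀ : 0 ≤ C := (integral_nonneg fun ω ↦ (exp_pos _).le).trans (hC 0)
  obtain ⟨δ, hδ, B, hB⟩ := exists_sum_range_le_sub_mul_of_limsup_lt_zero hC3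
  obtain ⟨u₀, hu₀⟩ := hC2 (δ / (4 * c)) (by positivity)
  set u := max u₀ 1
  have hu : 0 < u := zero_lt_one.trans_le (le_max_right _ _)
  set K := 8 / γ ^ 2 * C + c ^ 2 * u ^ 2
  have hK : 0 < K := by positivity
  set t := min (γ / 2) (min (1 / (c * u)) (δ / (4 * K)))
  have ht : 0 < t := by positivity
  have htγ : t ≤ γ / 2 := min_le_left _ _
  have htu : c * t * u ≤ 1 := by
    have : t ≤ 1 / (c * u) := (min_le_right _ _).trans (min_le_left _ _)
    rw [le_div_iff₀ (by positivity)] at this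
    linarith
  have htK : t * K ≤ δ / 4 := by
    have : t ≤ δ / (4 * K) := (min_le_right _ _).trans (min_le_right _ _)
    rw [le_div_iff₀ (by positivity)] at this
    linarith
  have hincr : ∀ i, mgf (Z i) μ t * mgf (θ i) μ (-(c * t)) ≤
      exp (t * (∫ ω, Z i ω ∂μ - c * ∫ ω, θ i ω ∂μ) + t * δ / 2) := fun i ↦ by
    refine (mgf_mul_mgf_neg_le_exp hγ hc.le ht.le htγ hu.le htu (hZpos i) (hZint i) (hexpint i)
      (hC i) (hθpos i) (hθmeas i) (hθint i) (hu₀ u (le_max_left _ _) i)).trans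
      (exp_le_exp.2 ?_)
    have hcε : c * t * (δ / (4 * c)) = t * δ / 4 := by field_simp
    nlinarith [mul_le_mul_of_nonneg_left htK ht.le]
  refine ⟨t, ht, exp (t * B), exp (-(t * δ / 2)), (exp_pos _).le,
    exp_lt_one_iff.2 (by linarith [mul_pos ht hδ]), fun n ↦ ⟨?_, ?_⟩⟩
  · exact integrable_exp_mul_sum_sub_mul hZmeas hθmeas hZindep hθindep hmutindep
      (fun i _ ↦ integrable_exp_mul_of_nonneg_of_le (hexpint i) ht.le (by linarith))
      (fun i _ ↦ integrable_exp_mul_of_nonpos (by nlinarith) (hθpos i) (hθmeas i))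
  · rw [mgf_sum_sub_mul hZmeas hθmeas hZindep hθindep hmutindep, ← prod_mul_distrib]
    exact prod_range_le_exp_mul_geometric ht.le (fun i ↦ mul_nonneg mgf_nonneg mgf_nonneg)
      hincr hB n

end

theorem lundberg_inhomogeneous_general
    {Ω : Type*} [MeasurableSpace Ω] (μ : Measure Ω) [IsProbabilityMeasure μ]
    (Z θ : ℕ → Ω → ℝ) (c : ℝ) (hc : 0 < c)
    (hZmeas : ∀ i, Measurable (Z i)) (hθmeas : ∀ i, Measurable (θ i))
    (hZpos : ∀ i ω, 0 ≤ Z i ω) (hθpos : ∀ i ω, 0 ≤ θ i ω)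
    (hZindep : iIndepFun Z μ)
    (hθindep : iIndepFun θ μ)
    (hmutindep : IndepFun (fun ω i => Z i ω) (fun ω i => θ i ω) μ)
    (hZint : ∀ i, Integrable (Z i) μ) (hθint : ∀ i, Integrable (θ i) μ)
    (γ : ℝ) (hγ : 0 < γ)
    (hexpint : ∀ i, Integrable (fun ω => Real.exp (γ * Z i ω)) μ)
    (hC1 : ∃ C : ℝ, ∀ i, ∫ ω, Real.exp (γ * Z i ω) ∂μ ≤ C)
    (hC2 : ∀ ε > (0 : ℝ), ∃ u₀ : ℝ, ∀ u ≥ u₀, ∀ i,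
      ∫ ω, Set.indicator {ω | u < θ i ω} (θ i) ω ∂μ ≤ ε)
    (hC3 : Filter.limsup
      (fun n : ℕ => (1 / (n : ℝ)) *
        ∑ i ∈ Finset.range n, (∫ ω, Z i ω ∂μ - c * ∫ ω, θ i ω ∂μ)) atTop < 0) :
    ∃ c₁ > (0 : ℝ), ∃ c₂ ≥ (0 : ℝ), ∀ x ≥ c₂,
      μ {ω | ∃ n : ℕ, x < ∑ i ∈ Finset.range (n + 1), (Z i ω - c * θ i ω)}
        ≤ ENNReal.ofReal (Real.exp (-c₁ * x)) := by
  obtain ⟨t, ht, A, r, hr₀, hr₁, hS⟩ := exists_mgf_sum_range_le_geometric hc hγ hZmeas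
    hθmeas hZpos hθpos hZindep hθindep hmutindep hZint hθint hexpint hC1 hC2 hC3
  have hruin : ∀ x, μ {ω | ∃ n : ℕ, x < ∑ i ∈ range (n + 1), (Z i ω - c * θ i ω)} ≤
      ENNReal.ofReal (exp (-t * x) * (A * r / (1 - r))) :=
    measure_exists_lt_le_of_mgf_le_geometric ht.le hr₀ hr₁ (fun n ↦ (hS (n + 1)).1)
      (fun n ↦ (hS (n + 1)).2.trans_eq (by ring))
  exact ⟨t / 2, by positivity, exists_forall_ge_le_exp_neg_half_mul ht hruin⟩

/-- Lundberg-type inequality for the inhomogeneous renewal risk model: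
the ruin probability ψ(x) = P(sup_n Σ_{i=1}^n (Z_i − c θ_i) > x) decays exponentially. -/
theorem lundberg_inhomogeneous
    {Ω : Type*} [MeasurableSpace Ω] (μ : Measure Ω) [IsProbabilityMeasure μ]
    (Z θ : ℕ → Ω → ℝ) (c : ℝ) (hc : 0 < c)
    (hZmeas : ∀ i, Measurable (Z i)) (hθmeas : ∀ i, Measurable (θ i))
    (hZpos : ∀ i ω, 0 ≤ Z i ω) (hθpos : ∀ i ω, 0 ≤ θ i ω)
    (hZindep : iIndepFun Z μ)
    (hθindep : iIndepFun θ μ)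
    (hmutindep : IndepFun (fun ω i => Z i ω) (fun ω i => θ i ω) μ)
    (hθnondeg : ∀ i, μ {ω | θ i ω = 0} < 1)
    (hZint : ∀ i, Integrable (Z i) μ) (hθint : ∀ i, Integrable (θ i) μ)
    (γ : ℝ) (hγ : 0 < γ)
    (hexpint : ∀ i, Integrable (fun ω => Real.exp (γ * Z i ω)) μ)
    (hC1 : ∃ C : ℝ, ∀ i, ∫ ω, Real.exp (γ * Z i ω) ∂μ ≤ C)
    (hC2 : ∀ ε > (0 : ℝ), ∃ u₀ : ℝ, ∀ u ≥ u₀, ∀ i,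
      ∫ ω, Set.indicator {ω | u < θ i ω} (θ i) ω ∂μ ≤ ε)
    (hC3 : Filter.limsup
      (fun n : ℕ => (1 / (n : ℝ)) *
        ∑ i ∈ Finset.range n, (∫ ω, Z i ω ∂μ - c * ∫ ω, θ i ω ∂μ)) atTop < 0) :
    ∃ c₁ > (0 : ℝ), ∃ c₂ ≥ (0 : ℝ), ∀ x ≥ c₂,
      μ {ω | ∃ n : ℕ, x < ∑ i ∈ Finset.range (n + 1), (Z i ω - c * θ i ω)}
        ≤ ENNReal.ofReal (Real.exp (-c₁ * x)) :=
  lundberg_inhomogeneous_general μ Z θ c hc hZmeas hθmeas hZpos hθpos hZindep hθindep hmutindep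
    hZint hθint γ hγ hexpint hC1 hC2 hC3
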